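/- Let d ≥ 1, let n = 2d, and let Δ be a well-distributed f-simplicial complex on [n]. Then Δ^c is also a well-distributed f-simplicial complex on [n]. -/

import Mathlib

/-! Complementation `A ↦ Aᶜ` identifies the `k`-faces of `Δ^c` with the `(n - k)`-sets
containing a facet of `Δ`, and the `k`-nonfaces of `Δ^c` with the `(n - k)`-sets that are not
faces of `Δ`. Counting inside the `(n - k)`-sets, the `f`-simplicial identity for `Δ` in degree
`n - k` becomes the one for `Δ^c` in degree `k`. Purity of `Δ` makes the facets of `Δ^c` exactly
the complements of the facets of `Δ`, so `Δ^c^c` has the same facets as `Δ`. -/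

open Finset

/-- `Δ`, given as the finset of its faces, is a simplicial complex on the vertex
set `Fin n`: a nonempty collection of subsets closed under taking subsets. -/
def IsComplex {n : ℕ} (Δ : Finset (Finset (Fin n))) : Prop :=
  Δ.Nonempty ∧ ∀ A ∈ Δ, ∀ B ⊆ A, B ∈ Δ

/-- The facets (maximal faces) of `Δ`. -/
def facets {n : ℕ} (Δ : Finset (Finset (Fin n))) : Finset (Finset (Fin n)) :=
  Δ.filter fun F => ∀ G ∈ Δ, F ⊆ G → F = G

/-- The simplicial complex generated by a family `𝔉`: all subsets of members of `𝔉`. -/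
def generated {n : ℕ} (𝔉 : Finset (Finset (Fin n))) : Finset (Finset (Fin n)) :=
  univ.filter fun A => ∃ F ∈ 𝔉, A ⊆ F

/-- The Newton complement dual `Δ^c`: the complex generated by the complements
of the facets of `Δ`. -/
def cdual {n : ℕ} (Δ : Finset (Finset (Fin n))) : Finset (Finset (Fin n)) :=
  generated ((facets Δ).image fun F => Fᶜ)

/-- The nonface complex of `Δ`: all subsets of `[n]` containing no facet of `Δ`. -/
def nonfaceComplex {n : ℕ} (Δ : Finset (Finset (Fin n))) : Finset (Finset (Fin n)) :=
  univ.filter fun A => ∀ F ∈ facets Δ, ¬ F ⊆ A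

/-- `Δ` is an `f`-simplicial complex: for every `k`, `Δ` and its nonface complex
have the same number of `k`-element members (the same `f`-vector). -/
def IsFComplex {n : ℕ} (Δ : Finset (Finset (Fin n))) : Prop :=
  ∀ k : ℕ, (Δ.filter fun A => A.card = k).card =
    ((nonfaceComplex Δ).filter fun A => A.card = k).card

/-- `Δ` is pure `(d-1)`-dimensional: every facet has exactly `d` elements. -/
def PureDim {n : ℕ} (d : ℕ) (Δ : Finset (Finset (Fin n))) : Prop :=
  ∀ F ∈ facets Δ, F.card = d

/-- The minimal nonfaces of `Δ`: sets that are not faces but all of whose proper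
subsets are faces. -/
def minNonfaces {n : ℕ} (Δ : Finset (Finset (Fin n))) : Finset (Finset (Fin n)) :=
  univ.filter fun A => A ∉ Δ ∧ ∀ B ⊂ A, B ∈ Δ

/-- The Alexander dual `Δ^∨`: the complex whose facets are the complements of the
minimal nonfaces of `Δ`. -/
def adual {n : ℕ} (Δ : Finset (Finset (Fin n))) : Finset (Finset (Fin n)) :=
  generated ((minNonfaces Δ).image fun F => Fᶜ)

/-- The homogeneous complement `Δ'` (in degree `e`): the complex generated by the
`e`-element subsets of `[n]` that are not facets of `Δ`. -/
def hcompl {n : ℕ} (e : ℕ) (Δ : Finset (Finset (Fin n))) : Finset (Finset (Fin n)) :=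
  generated (univ.filter fun A : Finset (Fin n) => A.card = e ∧ A ∉ facets Δ)

section SimplicialComplex

variable {n : ℕ}

lemma mem_generated {𝔉 : Finset (Finset (Fin n))} {A : Finset (Fin n)} :
    A ∈ generated 𝔉 ↔ ∃ F ∈ 𝔉, A ⊆ F := by
  simp [generated]

lemma isComplex_generated {𝔉 : Finset (Finset (Fin n))} (h𝔉 : 𝔉.Nonempty) :
    IsComplex (generated 𝔉) := by
  obtain ⟨F, hF⟩ := h𝔉
  refine ⟨⟨F, mem_generated.2 ⟨F, hF, Subset.rfl⟩⟩, fun A hA B hBA => ?_⟩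
  obtain ⟨G, hG, hAG⟩ := mem_generated.1 hA
  exact mem_generated.2 ⟨G, hG, hBA.trans hAG⟩

lemma exists_mem_facets_superset {Δ : Finset (Finset (Fin n))} {A : Finset (Fin n)}
    (hA : A ∈ Δ) : ∃ F ∈ facets Δ, A ⊆ F := by
  obtain ⟨F, hAF, hF, hmax⟩ :=
    (Δ.filter (A ⊆ ·)).exists_le_maximal (mem_filter.2 ⟨hA, Subset.rfl⟩)
  refine ⟨F, mem_filter.2 ⟨(mem_filter.1 hF).1, fun G hG hFG => ?_⟩, hAF⟩
  exact le_antisymm hFG (hmax (mem_filter.2 ⟨hG, hAF.trans hFG⟩) hFG)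

lemma facets_nonempty {Δ : Finset (Finset (Fin n))} (hΔ : Δ.Nonempty) : (facets Δ).Nonempty :=
  let ⟨_, hA⟩ := hΔ
  let ⟨F, hF, _⟩ := exists_mem_facets_superset hA
  ⟨F, hF⟩

lemma IsComplex.mem_iff_exists_mem_facets {Δ : Finset (Finset (Fin n))} (hΔ : IsComplex Δ)
    {A : Finset (Fin n)} : A ∈ Δ ↔ ∃ F ∈ facets Δ, A ⊆ F :=
  ⟨exists_mem_facets_superset, fun ⟨F, hF, hAF⟩ => hΔ.2 F (mem_filter.1 hF).1 A hAF⟩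

lemma facets_generated_of_card_eq {e : ℕ} {𝔉 : Finset (Finset (Fin n))}
    (h𝔉 : ∀ F ∈ 𝔉, F.card = e) : facets (generated 𝔉) = 𝔉 := by
  ext A
  simp only [facets, mem_filter, mem_generated]
  constructor
  · rintro ⟨⟨F, hF, hAF⟩, hmax⟩
    rwa [hmax F ⟨F, hF, Subset.rfl⟩ hAF]
  · intro hA
    refine ⟨⟨A, hA, Subset.rfl⟩, fun G ⟨F, hF, hGF⟩ hAG => ?_⟩
    exact eq_of_subset_of_card_le hAG ((card_le_card hGF).trans (by rw [h𝔉 F hF, h𝔉 A hA]))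

end SimplicialComplex

section ComplementDual

variable {n d : ℕ} {Δ : Finset (Finset (Fin n))}

lemma facets_cdual (hpure : PureDim d Δ) : facets (cdual Δ) = (facets Δ).image compl := by
  refine facets_generated_of_card_eq (e := n - d) fun F hF => ?_
  obtain ⟨G, hG, rfl⟩ := mem_image.1 hF
  rw [card_compl, Fintype.card_fin, hpure G hG]

lemma isComplex_cdual (hΔ : Δ.Nonempty) : IsComplex (cdual Δ) :=
  isComplex_generated ((facets_nonempty hΔ).image _)

lemma PureDim.cdual (hpure : PureDim d Δ) : PureDim (n - d) (cdual Δ) := by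
  intro F hF
  rw [facets_cdual hpure] at hF
  obtain ⟨G, hG, rfl⟩ := mem_image.1 hF
  rw [card_compl, Fintype.card_fin, hpure G hG]

lemma facets_cdual_cdual (hpure : PureDim d Δ) : facets (cdual (cdual Δ)) = facets Δ := by
  rw [cdual, facets_cdual hpure, image_image, compl_comp_compl, image_id]
  exact facets_generated_of_card_eq hpure

lemma mem_cdual_iff_compl_notMem_nonfaceComplex {A : Finset (Fin n)} :
    A ∈ cdual Δ ↔ Aᶜ ∉ nonfaceComplex Δ := by
  simp only [cdual, mem_generated, exists_mem_image, nonfaceComplex, mem_filter, mem_univ,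
    true_and, subset_compl_comm, not_forall, not_not, exists_prop]

lemma mem_nonfaceComplex_cdual_iff (hΔ : IsComplex Δ) (hpure : PureDim d Δ)
    {A : Finset (Fin n)} : A ∈ nonfaceComplex (cdual Δ) ↔ Aᶜ ∉ Δ := by
  simp only [nonfaceComplex, facets_cdual hpure, forall_mem_image, mem_filter, mem_univ, true_and,
    hΔ.mem_iff_exists_mem_facets, not_exists, not_and]
  exact forall₂_congr fun F _ => not_congr compl_le_iff_compl_le

end ComplementDual

section Counting

variable {n k : ℕ}

lemma card_filter_compl_mem_powersetCard (S : Finset (Finset (Fin n))) (hk : k ≤ n) :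
    #{A ∈ powersetCard k univ | Aᶜ ∈ S} = #{B ∈ S | B.card = n - k} := by
  refine card_nbij' compl compl (fun A hA => ?_) (fun B hB => ?_)
    (fun A _ => compl_compl A) (fun B _ => compl_compl B)
  · simp only [coe_filter, mem_powersetCard_univ, Set.mem_ofPred_eq] at hA ⊢
    rw [card_compl, Fintype.card_fin, hA.1]
    exact ⟨hA.2, rfl⟩
  · simp only [coe_filter, mem_powersetCard_univ, Set.mem_ofPred_eq, compl_compl] at hB ⊢
    rw [card_compl, Fintype.card_fin, hB.2]
    exact ⟨by omega, hB.1⟩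

lemma card_filter_compl_notMem_powersetCard (S : Finset (Finset (Fin n))) (hk : k ≤ n) :
    #{A ∈ powersetCard k univ | Aᶜ ∉ S} = n.choose k - #{B ∈ S | B.card = n - k} := by
  have hsplit :=
    card_filter_add_card_filter_not (s := powersetCard k (univ : Finset (Fin n))) (· ᶜ ∈ S)
  rw [card_powersetCard, card_univ, Fintype.card_fin,
    card_filter_compl_mem_powersetCard S hk] at hsplit
  omega

lemma filter_card_eq_eq_filter_compl_notMem {T S : Finset (Finset (Fin n))}
    (h : ∀ A, A ∈ T ↔ Aᶜ ∉ S) :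
    {A ∈ T | A.card = k} = {A ∈ powersetCard k (univ : Finset (Fin n)) | Aᶜ ∉ S} := by
  ext A
  simp only [mem_filter, mem_powersetCard_univ, h]
  tauto

lemma filter_card_eq_eq_empty (S : Finset (Finset (Fin n))) (hk : n < k) :
    {A ∈ S | A.card = k} = ∅ :=
  filter_eq_empty_iff.2 fun A _ hA =>
    hk.not_ge (hA ▸ (card_le_univ A).trans_eq (Fintype.card_fin n))

end Counting

lemma IsFComplex.cdual {n d : ℕ} {Δ : Finset (Finset (Fin n))} (hΔ : IsComplex Δ)
    (hpure : PureDim d Δ) (hf : IsFComplex Δ) : IsFComplex (cdual Δ) := by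
  intro k
  rcases le_or_gt k n with hk | hk
  · rw [filter_card_eq_eq_filter_compl_notMem fun _ => mem_cdual_iff_compl_notMem_nonfaceComplex,
      filter_card_eq_eq_filter_compl_notMem fun _ => mem_nonfaceComplex_cdual_iff hΔ hpure,
      card_filter_compl_notMem_powersetCard _ hk, card_filter_compl_notMem_powersetCard _ hk,
      hf (n - k)]
  · rw [filter_card_eq_eq_empty _ hk, filter_card_eq_eq_empty _ hk]

theorem stmt4_general {d n : ℕ} (hn : n = 2 * d)
    (Δ : Finset (Finset (Fin n))) (hΔ : IsComplex Δ) (hpure : PureDim d Δ)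
    (hf : IsFComplex Δ) (hwd : facets Δ ∩ facets (cdual Δ) = ∅) :
    IsComplex (cdual Δ) ∧ PureDim d (cdual Δ) ∧ IsFComplex (cdual Δ) ∧
      facets (cdual Δ) ∩ facets (cdual (cdual Δ)) = ∅ := by
  have hnd : n - d = d := by omega
  refine ⟨isComplex_cdual hΔ.1, hnd ▸ hpure.cdual, hf.cdual hΔ hpure, ?_⟩
  rw [facets_cdual_cdual hpure, inter_comm, hwd]

/-- if `Δ` is a well-distributed `f`-simplicial complex (`n = 2d`, pure
`(d-1)`-dimensional, `F(Δ) ∩ F(Δ^c) = ∅`), then so is `Δ^c`. -/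
theorem stmt4 {d n : ℕ} (hd : 1 ≤ d) (hn : n = 2 * d)
    (Δ : Finset (Finset (Fin n))) (hΔ : IsComplex Δ) (hpure : PureDim d Δ)
    (hf : IsFComplex Δ) (hwd : facets Δ ∩ facets (cdual Δ) = ∅) :
    IsComplex (cdual Δ) ∧ PureDim d (cdual Δ) ∧ IsFComplex (cdual Δ) ∧
      facets (cdual Δ) ∩ facets (cdual (cdual Δ)) = ∅ :=
  stmt4_general hn Δ hΔ hpure hf hwd
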